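/- In a CGDL(A) model over a complete I-action lattice A, for every state w and atomic program π₀, the satisfaction degree of ⟨π₀⟩(ρ ∨ ρ') equals that of ⟨π₀⟩ρ ∨ ⟨π₀⟩ρ', assuming each atomic program relates each state to at most singleton-supported fuzzy sets; hence ⟨π₀⟩(ρ∨ρ') ↔ ⟨π₀⟩ρ ∨ ⟨π₀⟩ρ' is valid. -/
import Mathlib


class ActionLattice (α : Type*) extends Lattice α where
  mul : α → α → α
  one : α
  zero : α
  star : α → α
  resid : α → α → α
  mul_assoc : ∀ a b c : α, mul (mul a b) c = mul a (mul b c)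
  one_mul : ∀ a : α, mul one a = a
  mul_one : ∀ a : α, mul a one = a
  zero_le : ∀ a : α, zero ≤ a
  mul_zero : ∀ a : α, mul a zero = zero
  zero_mul : ∀ a : α, mul zero a = zero
  mul_sup : ∀ a b c : α, mul a (b ⊔ c) = mul a b ⊔ mul a c
  sup_mul : ∀ a b c : α, mul (a ⊔ b) c = mul a c ⊔ mul b c
  resid_adj : ∀ a b c : α, mul a b ≤ c ↔ b ≤ resid a c
  star_ax : ∀ a : α, one ⊔ a ⊔ mul (star a) (star a) ≤ star a
  star_resid : ∀ a : α, star (resid a a) = resid a a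

class IActionLattice (α : Type*) extends ActionLattice α where
  le_one : ∀ a : α, a ≤ one

class CompleteActionLattice (α : Type*) extends CompleteLattice α, ActionLattice α

class CompleteIActionLattice (α : Type*) extends CompleteActionLattice α, IActionLattice α

open ActionLattice


/-- A fuzzy binary multirelation over `X` with values in `α`. -/
abbrev FuzzyMRel (X α : Type*) := Set (X × (X → α))


/-- Satisfaction degree of `⟨π⟩ρ` at `w`, where `R` interprets `π` and `v` is the
satisfaction degree function of `ρ`:  ∑_{φ|(w,φ)∈R} ∑_u φ(u);(u⊨ρ). -/
def diamond {W α : Type*} [CompleteActionLattice α] (R : FuzzyMRel W α) (v : W → α) (w : W) : α :=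
  ⨆ φ ∈ {φ : W → α | (w, φ) ∈ R}, ⨆ u, mul (φ u) (v u)

theorem diamond_atomic_sup {W α : Type*} [CompleteIActionLattice α]
    (R : FuzzyMRel W α) (v v' : W → α) (w : W)
    (hatomic : ∀ (x : W) (φ : W → α), (x, φ) ∈ R →
      ∃ u : W, ∀ y : W, y ≠ u → φ y = ActionLattice.zero) :
    diamond R (fun u => v u ⊔ v' u) w = diamond R v w ⊔ diamond R v' w := by
  unfold diamond
  simp only [ActionLattice.mul_sup, iSup_sup_eq]
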